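/- arXiv:1711.06227 — 5 statements merged into one kernel-verified Lean document; each statement's English description precedes it below -/
import Mathlib

section
/- The map χ : [0,1] → [0,1] defined by χ(x) = exp(1 - x^{-1}) for x ∈ (0,1] and χ(0) = 0 is a semigroup isomorphism from ([0,1], ⊼) to ([0,1], ·), i.e., χ is bijective and χ(x ⊼ y) = χ(x)·χ(y) for all x, y ∈ [0,1]. -/
noncomputable def boolMin (x y : ℝ) : ℝ :=
  if 0 < x ∧ 0 < y then x * y / (x + y - x * y) else 0

noncomputable def chi (x : ℝ) : ℝ :=
  if 0 < x then Real.exp (1 - x⁻¹) else 0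

/-!
Under `x ↦ x⁻¹ - 1` the operation `⊼` becomes addition, since `(x ⊼ y)⁻¹ = x⁻¹ + y⁻¹ - 1`;
`chi x = exp (-(x⁻¹ - 1))` then turns addition into multiplication. Bijectivity follows from
strict monotonicity of `chi` on `[0, ∞)` and the explicit inverse `y ↦ (1 - log y)⁻¹`.
-/

open Real Set

lemma chi_of_pos {x : ℝ} (hx : 0 < x) : chi x = exp (1 - x⁻¹) := if_pos hx

lemma chi_of_nonpos {x : ℝ} (hx : x ≤ 0) : chi x = 0 := if_neg hx.not_gt

lemma chi_nonneg (x : ℝ) : 0 ≤ chi x := by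
  unfold chi
  split_ifs
  exacts [(exp_pos _).le, le_rfl]

lemma chi_le_one {x : ℝ} (hx : x ≤ 1) : chi x ≤ 1 := by
  rcases le_or_gt x 0 with h | h
  · simp [chi_of_nonpos h]
  · rw [chi_of_pos h, exp_le_one_iff, sub_nonpos]
    exact one_le_inv₀ h |>.mpr hx

lemma strictMonoOn_chi : StrictMonoOn chi (Ici 0) := by
  intro x hx y hy hxy
  have hy : 0 < y := lt_of_le_of_lt hx hxy
  rw [chi_of_pos hy]
  rcases (mem_Ici.mp hx).eq_or_lt with rfl | hx
  · rw [chi_of_nonpos le_rfl]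
    exact exp_pos _
  · rw [chi_of_pos hx, exp_lt_exp, sub_lt_sub_iff_left]
    exact inv_strictAnti₀ hx hxy

lemma chi_inv_one_sub_log {y : ℝ} (hy : 0 < y) (hlog : log y < 1) :
    chi (1 - log y)⁻¹ = y := by
  rw [chi_of_pos (inv_pos.mpr (sub_pos.mpr hlog)), inv_inv, sub_sub_cancel, exp_log hy]

/-- The identity holds even when `x + y - x * y = 0`, as then both sides are `0`. -/
lemma inv_boolMin {x y : ℝ} (hx : 0 < x) (hy : 0 < y) :
    (boolMin x y)⁻¹ = x⁻¹ + y⁻¹ - 1 := by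
  rw [boolMin, if_pos ⟨hx, hy⟩, inv_div]
  field_simp
  ring

lemma boolMin_pos {x y : ℝ} (hx : 0 < x) (hx1 : x ≤ 1) (hy : 0 < y) :
    0 < boolMin x y := by
  have hden : 0 < x + y - x * y := by nlinarith
  rw [boolMin, if_pos ⟨hx, hy⟩]
  positivity

lemma chi_boolMin {x y : ℝ} (hx : 0 ≤ x) (hx1 : x ≤ 1) (hy : 0 ≤ y) :
    chi (boolMin x y) = chi x * chi y := by
  rcases hx.eq_or_lt with rfl | hx
  · simp [boolMin, chi_of_nonpos]
  rcases hy.eq_or_lt with rfl | hy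
  · simp [boolMin, chi_of_nonpos]
  rw [chi_of_pos (boolMin_pos hx hx1 hy), chi_of_pos hx, chi_of_pos hy, ← exp_add,
    inv_boolMin hx hy]
  ring_nf

theorem chi_semigroup_iso :
    Set.BijOn chi (Set.Icc (0:ℝ) 1) (Set.Icc (0:ℝ) 1) ∧
    ∀ x ∈ Set.Icc (0:ℝ) 1, ∀ y ∈ Set.Icc (0:ℝ) 1,
      chi (boolMin x y) = chi x * chi y := by
  refine ⟨⟨fun x hx => ⟨chi_nonneg x, chi_le_one hx.2⟩,
    strictMonoOn_chi.injOn.mono Icc_subset_Ici_self, ?_⟩,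
    fun x hx y hy => chi_boolMin hx.1 hx.2 hy.1⟩
  intro y ⟨hy0, hy1⟩
  rcases hy0.eq_or_lt with rfl | hy
  · exact ⟨0, left_mem_Icc.mpr zero_le_one, chi_of_nonpos le_rfl⟩
  have hlog : log y ≤ 0 := log_nonpos hy0 hy1
  exact ⟨(1 - log y)⁻¹, ⟨inv_nonneg.mpr (by linarith), inv_le_one_of_one_le₀ (by linarith)⟩,
    chi_inv_one_sub_log hy (by linarith)⟩
end

section
/- Let p, q ∈ (0,1) and define K(z) = z((1-p)/(z-p) + (1-q)/(z-q)) and G(z) = 1/(z - K(z)). Then the limit lim_{z→0} z·G(z) exists and equals 1/(p^{-1} + q^{-1} - 1). -/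
open Filter Complex Topology

/-! Off the origin `z G(z) = (1 - A z)⁻¹` with `A z = (1-p)/(z-p) + (1-q)/(z-q)`, and `A` is
continuous at `0` with `1 - A 0 = p⁻¹ + q⁻¹ - 1 > 1`, so the limit is `(p⁻¹ + q⁻¹ - 1)⁻¹`. -/

lemma tendsto_mul_inv_sub_mul_nhdsNE {𝕜 : Type*} [NormedField 𝕜] {A : 𝕜 → 𝕜} (hA : ContinuousAt A 0) (h : 1 - A 0 ≠ 0) :
    Tendsto (fun z => z * (z - z * A z)⁻¹) (𝓝[≠] 0) (𝓝 (1 - A 0)⁻¹) := by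
  have hlim : Tendsto (fun z => (1 - A z)⁻¹) (𝓝[≠] 0) (𝓝 (1 - A 0)⁻¹) :=
    ((tendsto_const_nhds.sub hA).inv₀ h).mono_left nhdsWithin_le_nhds
  refine hlim.congr' ?_
  filter_upwards [self_mem_nhdsWithin] with z (hz : z ≠ 0)
  rw [← mul_one_sub, mul_inv, ← mul_assoc, mul_inv_cancel₀ hz, one_mul]

lemma tendsto_I_mul_ofReal_nhdsGT_zero :
    Tendsto (fun y : ℝ => I * y) (𝓝[>] 0) (𝓝[≠] 0) := by
  refine tendsto_nhdsWithin_of_tendsto_nhds_of_eventually_within _ ?_ ?_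
  · have hcont : Continuous fun y : ℝ => I * y := by fun_prop
    exact (hcont.tendsto' 0 0 (by simp)).mono_left nhdsWithin_le_nhds
  · filter_upwards [self_mem_nhdsWithin] with y (hy : 0 < y)
    exact mul_ne_zero I_ne_zero (ofReal_ne_zero.mpr hy.ne')

lemma continuousAt_const_div_sub {𝕜 : Type*} [NormedField 𝕜] {a c x : 𝕜} (h : x ≠ c) :
    ContinuousAt (fun z => a / (z - c)) x :=
  continuousAt_const.div (continuousAt_id.sub continuousAt_const) (sub_ne_zero.mpr h)

theorem atom_at_zero_of_boolean_conv (p q : ℝ)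
    (hp : p ∈ Set.Ioo (0:ℝ) 1) (hq : q ∈ Set.Ioo (0:ℝ) 1) :
    Tendsto
      (fun y : ℝ =>
        (Complex.I * y) *
          (Complex.I * y -
            (Complex.I * y) * ((1 - (p:ℂ)) / (Complex.I * y - p)
              + (1 - (q:ℂ)) / (Complex.I * y - q)))⁻¹)
      (nhdsWithin 0 (Set.Ioi 0))
      (nhds ((1 / (p⁻¹ + q⁻¹ - 1) : ℝ) : ℂ)) := by
  have hpC : (p : ℂ) ≠ 0 := ofReal_ne_zero.mpr hp.1.ne'
  have hqC : (q : ℂ) ≠ 0 := ofReal_ne_zero.mpr hq.1.ne'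
  set A : ℂ → ℂ := fun z => (1 - (p:ℂ)) / (z - p) + (1 - (q:ℂ)) / (z - q)
  have hA0 : 1 - A 0 = ((p⁻¹ + q⁻¹ - 1 : ℝ) : ℂ) := by
    simp only [A]
    push_cast
    field_simp
    ring
  have hpos : 0 < p⁻¹ + q⁻¹ - 1 := by
    have hp_inv : 1 < p⁻¹ := (one_lt_inv₀ hp.1).mpr hp.2
    have hq_inv : 1 < q⁻¹ := (one_lt_inv₀ hq.1).mpr hq.2
    linarith
  have hA1 : 1 - A 0 ≠ 0 := by
    rw [hA0]
    exact_mod_cast hpos.ne'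
  have hAcont : ContinuousAt A 0 :=
    (continuousAt_const_div_sub hpC.symm).add (continuousAt_const_div_sub hqC.symm)
  rw [one_div, ofReal_inv, ← hA0]
  exact (tendsto_mul_inv_sub_mul_nhdsNE hAcont hA1).comp tendsto_I_mul_ofReal_nhdsGT_zero
end

section
/- Let F, G : [0,∞) → [0,1] be distribution functions of nonnegative random variables (monotone nondecreasing, right-continuous, tending to 1 at ∞). Define (F ⊻ G)(t) = F(t) ⊼ G(t), where ⊼ is the Boolean min-convolution. Then F ⊻ G is again a distribution function of a nonnegative random variable. -/
open Set Filter Topology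

/-- `F` is the distribution function of a nonnegative random variable:
monotone and right-continuous on `[0,∞)`, with values in `[0,1]` tending to `1` at `∞`. -/
def IsDistFun (F : ℝ → ℝ) : Prop :=
  MonotoneOn F (Ici 0) ∧
  (∀ t ∈ Ici (0:ℝ), ContinuousWithinAt F (Ici t) t) ∧
  Tendsto F atTop (nhds 1) ∧
  (∀ t ∈ Ici (0:ℝ), F t ∈ Icc (0:ℝ) 1)

/-! On `(0,1]²` one has `x ⊼ y = 1 / (1/x + 1/y - 1)`, which is increasing in both arguments and
bounded by `min x y`. The bound makes `⊼` continuous on all of `[0,1]²`, also where it switches to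
the branch `0`, so `t ↦ F t ⊼ G t` inherits right-continuity and the limit `1 ⊼ 1 = 1` from
`F` and `G`. -/

lemma boolMin_denom_pos {x y : ℝ} (hx : 0 < x) (hy : 0 < y) (hy1 : y ≤ 1) :
    0 < x + y - x * y := by
  nlinarith

lemma boolMin_of_pos {x y : ℝ} (hx : 0 < x) (hy : 0 < y) :
    boolMin x y = x * y / (x + y - x * y) :=
  if_pos ⟨hx, hy⟩

lemma boolMin_of_not_pos {x y : ℝ} (h : ¬(0 < x ∧ 0 < y)) : boolMin x y = 0 :=
  if_neg h

lemma boolMin_comm (x y : ℝ) : boolMin x y = boolMin y x := by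
  simp only [boolMin, and_comm, mul_comm, add_comm]

lemma boolMin_one_one : boolMin 1 1 = 1 := by
  norm_num [boolMin]

lemma boolMin_nonneg {x y : ℝ} (hy1 : y ≤ 1) : 0 ≤ boolMin x y := by
  by_cases h : 0 < x ∧ 0 < y
  · rw [boolMin_of_pos h.1 h.2]
    exact (div_pos (mul_pos h.1 h.2) (boolMin_denom_pos h.1 h.2 hy1)).le
  · rw [boolMin_of_not_pos h]

lemma boolMin_le_left {x y : ℝ} (hx : 0 ≤ x) (hy1 : y ≤ 1) : boolMin x y ≤ x := by
  by_cases h : 0 < x ∧ 0 < y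
  · rw [boolMin_of_pos h.1 h.2, div_le_iff₀ (boolMin_denom_pos h.1 h.2 hy1)]
    nlinarith [mul_nonneg (mul_pos h.1 h.1).le (sub_nonneg.2 hy1)]
  · rwa [boolMin_of_not_pos h]

lemma boolMin_le_min {x y : ℝ} (hx : 0 ≤ x) (hy : 0 ≤ y) (hx1 : x ≤ 1) (hy1 : y ≤ 1) :
    boolMin x y ≤ min x y :=
  le_min (boolMin_le_left hx hy1) (boolMin_comm x y ▸ boolMin_le_left hy hx1)

lemma boolMin_le_boolMin {a b c d : ℝ} (hac : a ≤ c) (hbd : b ≤ d) (hd1 : d ≤ 1) :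
    boolMin a b ≤ boolMin c d := by
  by_cases h : 0 < a ∧ 0 < b
  · have hc : 0 < c := h.1.trans_le hac
    have hd : 0 < d := h.2.trans_le hbd
    rw [boolMin_of_pos h.1 h.2, boolMin_of_pos hc hd,
      div_le_div_iff₀ (boolMin_denom_pos h.1 h.2 (hbd.trans hd1)) (boolMin_denom_pos hc hd hd1)]
    nlinarith [mul_nonneg (mul_pos h.1 hc).le (sub_nonneg.2 hbd),
      mul_nonneg (mul_pos h.2 hd).le (sub_nonneg.2 hac)]
  · rw [boolMin_of_not_pos h]
    exact boolMin_nonneg hd1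

lemma continuousOn_boolMin :
    ContinuousOn (fun p : ℝ × ℝ => boolMin p.1 p.2) (Icc 0 1 ×ˢ Icc 0 1) := by
  rintro ⟨a, b⟩ ⟨⟨ha0, ha1⟩, ⟨hb0, hb1⟩⟩
  by_cases h : 0 < a ∧ 0 < b
  · have hformula : ContinuousAt (fun p : ℝ × ℝ => p.1 * p.2 / (p.1 + p.2 - p.1 * p.2)) (a, b) :=
      (continuous_fst.mul continuous_snd).continuousAt.div (by fun_prop)
        (boolMin_denom_pos h.1 h.2 hb1).ne'
    refine (hformula.congr ?_).continuousWithinAt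
    filter_upwards [(isOpen_Ioi.prod isOpen_Ioi).mem_nhds (show (a, b) ∈ Ioi 0 ×ˢ Ioi 0 from h)]
      with p hp
    exact (boolMin_of_pos hp.1 hp.2).symm
  · have hmin : min a b = 0 := by
      rcases not_and_or.1 h with ha | hb
      · rw [le_antisymm (not_lt.1 ha) ha0]
        exact min_eq_left hb0
      · rw [le_antisymm (not_lt.1 hb) hb0]
        exact min_eq_right ha0
    have hmin_tendsto : Tendsto (fun p : ℝ × ℝ => min p.1 p.2)
        (𝓝[Icc 0 1 ×ˢ Icc 0 1] (a, b)) (𝓝 0) :=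
      hmin ▸ (continuous_fst.min continuous_snd).continuousWithinAt
    show Tendsto _ _ (𝓝 (boolMin a b))
    rw [boolMin_of_not_pos h]
    refine tendsto_of_tendsto_of_tendsto_of_le_of_le' tendsto_const_nhds hmin_tendsto ?_ ?_
    all_goals filter_upwards [self_mem_nhdsWithin] with p ⟨⟨hp0, hp1⟩, ⟨hq0, hq1⟩⟩
    · exact boolMin_nonneg hq1
    · exact boolMin_le_min hp0 hq0 hp1 hq1

lemma Filter.Tendsto.boolMin {α : Type*} {l : Filter α} {u v : α → ℝ} {a b : ℝ}
    (hu : Tendsto u l (𝓝 a)) (hv : Tendsto v l (𝓝 b)) (ha : a ∈ Icc 0 1) (hb : b ∈ Icc 0 1)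
    (huv : ∀ᶠ t in l, u t ∈ Icc 0 1 ∧ v t ∈ Icc 0 1) :
    Tendsto (fun t => _root_.boolMin (u t) (v t)) l (𝓝 (_root_.boolMin a b)) :=
  (continuousOn_boolMin (a, b) ⟨ha, hb⟩).tendsto.comp
    (tendsto_nhdsWithin_iff.2 ⟨hu.prodMk_nhds hv, huv⟩)

theorem boolean_max_conv_isDistFun (F G : ℝ → ℝ)
    (hF : IsDistFun F) (hG : IsDistFun G) :
    IsDistFun (fun t => boolMin (F t) (G t)) := by
  obtain ⟨hFm, hFc, hFt, hFb⟩ := hF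
  obtain ⟨hGm, hGc, hGt, hGb⟩ := hG
  refine ⟨?_, ?_, ?_, ?_⟩
  · intro s hs t ht hst
    exact boolMin_le_boolMin (hFm hs ht hst) (hGm hs ht hst) (hGb t ht).2
  · intro t ht
    refine (hFc t ht).boolMin (hGc t ht) (hFb t ht) (hGb t ht) ?_
    filter_upwards [self_mem_nhdsWithin] with s hs
    have hs0 : s ∈ Ici (0 : ℝ) := mem_Ici.2 (le_trans ht hs)
    exact ⟨hFb s hs0, hGb s hs0⟩
  · have hlim := hFt.boolMin hGt ⟨zero_le_one, le_rfl⟩ ⟨zero_le_one, le_rfl⟩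
      ((eventually_ge_atTop 0).mono fun t ht => ⟨hFb t ht, hGb t ht⟩)
    rwa [boolMin_one_one] at hlim
  · intro t ht
    exact ⟨boolMin_nonneg (hGb t ht).2,
      (boolMin_le_left (hFb t ht).1 (hGb t ht).2).trans (hFb t ht).2⟩
end

section
/- For α > 0 and λ > 0, the Dagum distribution function F(t) = (1 + λ t^{-α})^{-1} is Boolean max-stable: F^{⊻ n}(n^{1/α} t) = F(t) for all n ∈ ℕ, n ≥ 1, and all t > 0, where F^{⊻ n} denotes the n-fold Boolean max-convolution of F with itself. -/
/-- `n`-fold Boolean max-convolution of a distribution function with itself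
(`nfold F 0 = 1`, the unit for pointwise `boolMin`). -/
noncomputable def nfold (F : ℝ → ℝ) : ℕ → ℝ → ℝ
  | 0 => fun _ => 1
  | n + 1 => fun t => boolMin (F t) (nfold F n t)

/- Writing `F = (1 + u)⁻¹`, Boolean max-convolution adds the odds `u = F⁻¹ - 1`, so
`F^{⊻ n} = (1 + n u)⁻¹`. For the Dagum law `u(t) = λ t^{-α}`, so rescaling `t` by `n^{1/α}`
divides `u` by `n`. -/

/-- When `1 + a + b = 0` both sides vanish, by the conventions `x / 0 = 0` and `0⁻¹ = 0`. -/
theorem boolMin_inv_one_add (a b : ℝ) (ha : -1 < a) (hb : -1 < b) :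
    boolMin (1 + a)⁻¹ (1 + b)⁻¹ = (1 + a + b)⁻¹ := by
  have ha' : 0 < 1 + a := by linarith
  have hb' : 0 < 1 + b := by linarith
  have hsum : (1 + a)⁻¹ + (1 + b)⁻¹ - (1 + a)⁻¹ * (1 + b)⁻¹
      = (1 + a + b) * ((1 + a)⁻¹ * (1 + b)⁻¹) := by
    field_simp
    ring
  rw [boolMin, if_pos ⟨inv_pos.mpr ha', inv_pos.mpr hb'⟩, hsum,
    div_mul_cancel_right₀ (by positivity)]

theorem nfold_eq_inv_one_add_mul (F : ℝ → ℝ) (t u : ℝ) (hu : 0 ≤ u) (hF : F t = (1 + u)⁻¹)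
    (n : ℕ) : nfold F n t = (1 + n * u)⁻¹ := by
  induction n with
  | zero => simp [nfold]
  | succ n ih =>
    have hnu : 0 ≤ (n : ℝ) * u := by positivity
    change boolMin (F t) (nfold F n t) = _
    rw [hF, ih, boolMin_inv_one_add _ _ (by linarith) (by linarith)]
    push_cast
    ring

theorem rpow_one_div_mul_rpow_neg {c t α : ℝ} (hc : 0 ≤ c) (ht : 0 ≤ t) (hα : α ≠ 0) :
    (c ^ (1 / α) * t) ^ (-α) = c⁻¹ * t ^ (-α) := by
  rw [Real.mul_rpow (Real.rpow_nonneg hc _) ht, ← Real.rpow_mul hc,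
    one_div_mul_eq_div, neg_div, div_self hα, Real.rpow_neg_one]

theorem dagum_boolean_max_stable (lam α : ℝ) (hlam : 0 < lam) (hα : 0 < α) :
    ∀ n : ℕ, 1 ≤ n → ∀ t : ℝ, 0 < t →
      nfold (fun s => (1 + lam * s ^ (-α))⁻¹) n ((n : ℝ) ^ (1 / α) * t)
        = (1 + lam * t ^ (-α))⁻¹ := by
  intro n hn t ht
  have hn' : (n : ℝ) ≠ 0 := by positivity
  have hodds : 0 ≤ lam * ((n : ℝ) ^ (1 / α) * t) ^ (-α) := by positivity
  rw [nfold_eq_inv_one_add_mul (fun s => (1 + lam * s ^ (-α))⁻¹) _ _ hodds rfl,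
    rpow_one_div_mul_rpow_neg n.cast_nonneg ht.le hα.ne', mul_left_comm,
    mul_inv_cancel_left₀ hn']
end

section
/- Let F ∈ Δ₊ with F(t) > 0 for t > 0. If there exist G ∈ Δ₊ and constants a_n > 0 such that G^{⊻ n}(a_n t) → F(t) for all t > 0, and F is the Dagum-type limit arising this way, then F(t) = (1 + λ t^{-α})^{-1} for some λ > 0, α > 0. Conversely, every such F is Boolean max-stable (take G = F and a_n = n^{-1/α}). -/
open Set Filter Topology

/-!
The odds `odds x = 1/x - 1 ∈ [0, ∞]` turn Boolean max-convolution into addition, so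
`odds (G^{⊻n}) = n * odds G`, and `G^{⊻n} (a n * t) → F t` becomes `n * K (a n * t) → L t`
with `K = odds ∘ G`, `L = odds ∘ F`. Comparing the index `n` with `⌈λ n⌉` (convergence of
types), a subsequential limit `c` of `a ⌈λ n⌉ / a n` satisfies `L (c t) = L t / λ` across the
jumps of `L`. The scale `c(λ)` is unique, multiplicative and monotone in `λ`, hence
`c(λ) = λ^β`, which forces `L t = L t₀ (t / t₀)^(-1/β)`; right-continuity of `F` excludes
`β = 0`. Conversely a Dagum law is exactly stable: `F^{⊻n} (n^{1/α} t) = F t`.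
-/

open ENNReal

/-- `exp (-odds F)` is the transfer map `X(F) = exp (1 - F⁻¹)` to classical max-stability;
`odds x = ∞` for `x ≤ 0`. -/
noncomputable def odds (x : ℝ) : ℝ≥0∞ := (ENNReal.ofReal x)⁻¹ - 1

theorem continuous_odds : Continuous odds :=
  (ENNReal.continuous_sub_right 1).comp (continuous_inv.comp ENNReal.continuous_ofReal)

theorem odds_antitone : Antitone odds := fun _ _ hxy =>
  tsub_le_tsub_right (ENNReal.inv_le_inv.2 (ENNReal.ofReal_le_ofReal hxy)) 1

@[simp] theorem odds_one : odds 1 = 0 := by simp [odds]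

theorem odds_eq_zero_iff {x : ℝ} : odds x = 0 ↔ 1 ≤ x := by
  rw [odds, tsub_eq_zero_iff_le, ENNReal.inv_le_one, ENNReal.one_le_ofReal]

theorem odds_eq_top_iff {x : ℝ} : odds x = ∞ ↔ x ≤ 0 := by
  simp [odds, ENNReal.sub_eq_top_iff]

theorem odds_of_pos {x : ℝ} (hx : 0 < x) : odds x = ENNReal.ofReal (x⁻¹ - 1) := by
  rw [odds, ENNReal.ofReal_sub _ zero_le_one, ENNReal.ofReal_inv_of_pos hx, ENNReal.ofReal_one]

theorem ofReal_eq_inv_one_add_odds {x : ℝ} (hx : x ≤ 1) :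
    ENNReal.ofReal x = (1 + odds x)⁻¹ := by
  rw [odds, add_tsub_cancel_of_le (ENNReal.one_le_inv.2 (ENNReal.ofReal_le_one.2 hx)), inv_inv]

theorem odds_injOn : InjOn odds (Icc 0 1) := fun x hx y hy h =>
  (ENNReal.ofReal_eq_ofReal_iff hx.1 hy.1).1 <| by
    rw [ofReal_eq_inv_one_add_odds hx.2, ofReal_eq_inv_one_add_odds hy.2, h]

theorem inv_one_add_mem_Icc {y : ℝ} (hy : 0 ≤ y) : (1 + y)⁻¹ ∈ Icc (0 : ℝ) 1 :=
  ⟨by positivity, inv_le_one_of_one_le₀ (by linarith)⟩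

theorem odds_inv_one_add {y : ℝ} (hy : 0 ≤ y) : odds (1 + y)⁻¹ = ENNReal.ofReal y := by
  rw [odds_of_pos (by positivity), inv_inv, add_sub_cancel_left]

theorem eq_inv_one_add_of_odds_eq {x y : ℝ} (hx : x ∈ Icc 0 1) (hy : 0 ≤ y)
    (h : odds x = ENNReal.ofReal y) : x = (1 + y)⁻¹ :=
  odds_injOn hx (inv_one_add_mem_Icc hy) (by rw [h, odds_inv_one_add hy])

theorem boolMin_mem_Icc {x y : ℝ} (hx : x ≤ 1) (hy : y ≤ 1) : boolMin x y ∈ Icc 0 1 := by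
  unfold boolMin
  split_ifs with h
  · obtain ⟨hx₀, hy₀⟩ := h
    have hden : 0 < x + y - x * y := by nlinarith
    exact ⟨by positivity, (div_le_one hden).2 (by nlinarith)⟩
  · exact ⟨le_rfl, zero_le_one⟩

theorem odds_boolMin {x y : ℝ} (hx : x ≤ 1) (hy : y ≤ 1) :
    odds (boolMin x y) = odds x + odds y := by
  unfold boolMin
  split_ifs with h
  · obtain ⟨hx₀, hy₀⟩ := h
    have hden : 0 < x + y - x * y := by nlinarith
    rw [odds_of_pos (by positivity), odds_of_pos hx₀, odds_of_pos hy₀,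
      ← ENNReal.ofReal_add (sub_nonneg.2 ((one_le_inv₀ hx₀).2 hx))
        (sub_nonneg.2 ((one_le_inv₀ hy₀).2 hy))]
    congr 1
    field_simp
    ring
  · rcases not_and_or.1 h with h | h <;>
      simp [odds_eq_top_iff.2 le_rfl, odds_eq_top_iff.2 (not_lt.1 h)]

theorem nfold_mem_Icc (G : ℝ → ℝ) {s : ℝ} (hs : G s ≤ 1) : ∀ n, nfold G n s ∈ Icc 0 1
  | 0 => ⟨zero_le_one, le_rfl⟩
  | n + 1 => boolMin_mem_Icc hs (nfold_mem_Icc G hs n).2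

theorem odds_nfold (G : ℝ → ℝ) {s : ℝ} (hs : G s ≤ 1) :
    ∀ n : ℕ, odds (nfold G n s) = n * odds (G s)
  | 0 => by simp [nfold]
  | n + 1 => by
    rw [nfold, odds_boolMin hs (nfold_mem_Icc G hs n).2, odds_nfold G hs n]
    push_cast
    ring

theorem tendsto_natCast_mul_odds {G : ℝ → ℝ} {x : ℕ → ℝ} {y : ℝ} (hG : ∀ n, G (x n) ≤ 1)
    (h : Tendsto (fun n => nfold G n (x n)) atTop (𝓝 y)) :
    Tendsto (fun n : ℕ => (n : ℝ≥0∞) * odds (G (x n))) atTop (𝓝 (odds y)) := by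
  simpa only [Function.comp_def, odds_nfold G (hG _)] using (continuous_odds.tendsto y).comp h

theorem nfold_rpow_inv_mul_of_dagum {F : ℝ → ℝ} {lam α : ℝ} (hlam : 0 ≤ lam) (hα : α ≠ 0)
    (hF : ∀ t, 0 < t → F t = (1 + lam * t ^ (-α))⁻¹) {n : ℕ} (hn : n ≠ 0) {t : ℝ} (ht : 0 < t) :
    nfold F n ((n : ℝ) ^ α⁻¹ * t) = F t := by
  have hn' : (0 : ℝ) < n := by positivity
  have hs : 0 < (n : ℝ) ^ α⁻¹ * t := by positivity
  have hF_mem : ∀ s, 0 < s → F s ∈ Icc 0 1 := fun s hs => by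
    rw [hF s hs]; exact inv_one_add_mem_Icc (by positivity)
  have hpow : ((n : ℝ) ^ α⁻¹ * t) ^ (-α) = (n : ℝ)⁻¹ * t ^ (-α) := by
    rw [Real.mul_rpow (by positivity) ht.le, ← Real.rpow_mul hn'.le,
      show α⁻¹ * -α = -1 by field_simp, Real.rpow_neg_one]
  refine odds_injOn (nfold_mem_Icc F (hF_mem _ hs).2 n) (hF_mem t ht) ?_
  rw [odds_nfold F (hF_mem _ hs).2, hF _ hs, hF t ht, odds_inv_one_add (by positivity),
    odds_inv_one_add (by positivity), ← ENNReal.ofReal_natCast, ← ENNReal.ofReal_mul hn'.le, hpow]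
  congr 1
  field_simp

/-- `L (c * t) = L t / lam` for all `t > 0`, read across the jumps of `L`. -/
def IsScaling (L : ℝ → ℝ≥0∞) (lam c : ℝ) : Prop :=
  0 < c ∧ ∀ t, 0 < t →
    (∀ u, 0 < u → u < c * t → L t ≤ ENNReal.ofReal lam * L u) ∧
    (∀ v, c * t < v → ENNReal.ofReal lam * L v ≤ L t)

namespace IsScaling

variable {L : ℝ → ℝ≥0∞} {lam μ c c' : ℝ} {t₀ : ℝ}

theorem mul {d : ℝ} (h₁ : IsScaling L lam c) (h₂ : IsScaling L μ d) (hlam : 0 ≤ lam) :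
    IsScaling L (lam * μ) (c * d) := by
  obtain ⟨hc, h₁⟩ := h₁
  obtain ⟨hd, h₂⟩ := h₂
  refine ⟨mul_pos hc hd, fun t ht => ⟨fun u hu hut => ?_, fun v hvt => ?_⟩⟩
  · obtain ⟨s, hus, hst⟩ :=
      exists_between (show u / c < d * t by rwa [div_lt_iff₀' hc, ← mul_assoc])
    have hs : 0 < s := (div_pos hu hc).trans hus
    calc L t ≤ ENNReal.ofReal μ * L s := (h₂ t ht).1 s hs hst
      _ ≤ ENNReal.ofReal μ * (ENNReal.ofReal lam * L u) := by
        gcongr; exact (h₁ s hs).1 u hu ((div_lt_iff₀' hc).1 hus)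
      _ = ENNReal.ofReal (lam * μ) * L u := by rw [ENNReal.ofReal_mul hlam]; ring
  · obtain ⟨s, hts, hsv⟩ :=
      exists_between (show d * t < v / c by rwa [lt_div_iff₀' hc, ← mul_assoc])
    have hs : 0 < s := (mul_pos hd ht).trans hts
    calc ENNReal.ofReal (lam * μ) * L v = ENNReal.ofReal μ * (ENNReal.ofReal lam * L v) := by
          rw [ENNReal.ofReal_mul hlam]; ring
      _ ≤ ENNReal.ofReal μ * L s := by gcongr; exact (h₁ s hs).2 v ((lt_div_iff₀' hc).1 hsv)
      _ ≤ L t := (h₂ t ht).2 s hts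

theorem level_le_of_scale_lt (h₁ : IsScaling L lam c) (h₂ : IsScaling L μ c') (hc : c' < c)
    (hμ : 0 < μ) (ht₀ : 0 < t₀) (hL₀ : L t₀ ≠ 0) (hL₀' : L t₀ ≠ ∞) : μ ≤ lam := by
  obtain ⟨w, hw₁, hw₂⟩ := exists_between (mul_lt_mul_of_pos_right hc ht₀)
  have hw : 0 < w := (mul_pos h₂.1 ht₀).trans hw₁
  have hlam_w : L t₀ ≤ ENNReal.ofReal lam * L w := (h₁.2 t₀ ht₀).1 w hw hw₂
  have hμ_w : ENNReal.ofReal μ * L w ≤ L t₀ := (h₂.2 t₀ ht₀).2 w hw₁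
  have hLw : L w ≠ 0 := fun h => hL₀ (by simpa [h] using hlam_w)
  have hLw' : L w ≠ ∞ := fun h => hL₀' (top_le_iff.1 (by simpa [h, hμ] using hμ_w))
  have := (ENNReal.mul_le_mul_iff_left hLw hLw').1 (hμ_w.trans hlam_w)
  exact (ENNReal.ofReal_le_ofReal_iff'.1 this).resolve_right hμ.not_ge

/-- A gap between two scales of the same level would make `L` increase along a geometric
sequence, against `L → 0`. -/
theorem scale_le_of_same_level (h₁ : IsScaling L lam c) (h₂ : IsScaling L lam c')
    (ht₀ : 0 < t₀) (hL₀ : L t₀ ≠ 0) (hL_top : Tendsto L atTop (𝓝 0)) : c ≤ c' := by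
  by_contra! hlt
  obtain ⟨ρ, hρ, hρc⟩ := exists_between ((one_lt_div h₂.1).2 hlt)
  have step : ∀ t, 0 < t → L t ≤ L (ρ * t) := by
    intro t ht
    have hρt : c' * (ρ * t) < c * t := by
      rw [← mul_assoc, mul_comm c' ρ]
      exact mul_lt_mul_of_pos_right ((lt_div_iff₀ h₂.1).1 hρc) ht
    obtain ⟨w, hw₁, hw₂⟩ := exists_between hρt
    have hw : 0 < w := lt_trans (by have := h₂.1; positivity) hw₁
    exact ((h₁.2 t ht).1 w hw hw₂).trans ((h₂.2 (ρ * t) (by positivity)).2 w hw₁)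
  have hchain : ∀ k : ℕ, L t₀ ≤ L (ρ ^ k * t₀) := by
    intro k
    induction k with
    | zero => simp
    | succ k ih => exact ih.trans (by rw [pow_succ', mul_assoc]; exact step _ (by positivity))
  have hlim : Tendsto (fun k : ℕ => L (ρ ^ k * t₀)) atTop (𝓝 0) :=
    hL_top.comp ((tendsto_pow_atTop_atTop_of_one_lt hρ).atTop_mul_const ht₀)
  exact hL₀ (nonpos_iff_eq_zero.1 (ge_of_tendsto' hlim hchain))

theorem scale_mono (h₁ : IsScaling L lam c) (h₂ : IsScaling L μ c') (hle : lam ≤ μ)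
    (hlam : 0 < lam) (ht₀ : 0 < t₀) (hL₀ : L t₀ ≠ 0) (hL₀' : L t₀ ≠ ∞)
    (hL_top : Tendsto L atTop (𝓝 0)) : c ≤ c' := by
  by_contra! hlt
  obtain rfl := hle.antisymm (h₁.level_le_of_scale_lt h₂ hlt (hlam.trans_le hle) ht₀ hL₀ hL₀')
  exact hlt.not_ge (h₁.scale_le_of_same_level h₂ ht₀ hL₀ hL_top)

end IsScaling

theorem AddMonoidHom.map_eq_map_one_mul_of_monotone (g : ℝ →+ ℝ) (hg : Monotone g) (x : ℝ) :
    g x = g 1 * x := by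
  have hq (q : ℚ) : g q = g 1 * q := by simpa [mul_comm] using map_ratCast_smul g ℝ ℝ q 1
  have hg₁ : 0 ≤ g 1 := by simpa using hg zero_le_one
  have hcont : Tendsto (fun y => g 1 * y) (𝓝 x) (𝓝 (g 1 * x)) :=
    (continuous_const.mul continuous_id).tendsto x
  apply le_antisymm
  · refine ge_of_tendsto (hcont.mono_left (nhdsWithin_le_nhds (s := Ioi x))) ?_
    filter_upwards [self_mem_nhdsWithin] with y (hy : x < y)
    obtain ⟨q, hxq, hqy⟩ := exists_rat_btwn hy
    calc g x ≤ g q := hg hxq.le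
      _ = g 1 * q := hq q
      _ ≤ g 1 * y := by gcongr
  · refine le_of_tendsto (hcont.mono_left (nhdsWithin_le_nhds (s := Iio x))) ?_
    filter_upwards [self_mem_nhdsWithin] with y (hy : y < x)
    obtain ⟨q, hyq, hqx⟩ := exists_rat_btwn hy
    calc g 1 * y ≤ g 1 * q := by gcongr
      _ = g q := (hq q).symm
      _ ≤ g x := hg hqx.le

theorem exists_rpow_of_map_mul_of_monotoneOn {f : ℝ → ℝ} (hpos : ∀ x, 0 < x → 0 < f x)
    (hmul : ∀ x y, 0 < x → 0 < y → f (x * y) = f x * f y) (hmono : MonotoneOn f (Ioi 0)) :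
    ∃ β : ℝ, 0 ≤ β ∧ ∀ x, 0 < x → f x = x ^ β := by
  let g : ℝ →+ ℝ := AddMonoidHom.mk' (fun y => Real.log (f (Real.exp y))) fun y z => by
    rw [Real.exp_add, hmul _ _ (Real.exp_pos y) (Real.exp_pos z),
      Real.log_mul (hpos _ (Real.exp_pos y)).ne' (hpos _ (Real.exp_pos z)).ne']
  have hg : Monotone g := fun y z hyz =>
    Real.log_le_log (hpos _ (Real.exp_pos y))
      (hmono (Real.exp_pos y) (Real.exp_pos z) (Real.exp_le_exp.2 hyz))
  refine ⟨g 1, by simpa using hg zero_le_one, fun x hx => ?_⟩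
  have hlog : Real.log (f x) = g 1 * Real.log x := by
    rw [← g.map_eq_map_one_mul_of_monotone hg, AddMonoidHom.mk'_apply, Real.exp_log hx]
  rw [Real.rpow_def_of_pos hx, mul_comm, ← hlog, Real.exp_log (hpos x hx)]

section ConvergenceOfTypes

variable {K L : ℝ → ℝ≥0∞} {a : ℕ → ℝ} {lam t₀ : ℝ}

theorem tendsto_ofReal_mul_natCast_mul_ceil
    (hconv : ∀ t, 0 < t → Tendsto (fun n : ℕ => (n : ℝ≥0∞) * K (a n * t)) atTop (𝓝 (L t)))
    (hlam : 0 < lam) {t : ℝ} (ht : 0 < t) :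
    Tendsto (fun n : ℕ => ENNReal.ofReal lam * (n * K (a ⌈lam * n⌉₊ * t))) atTop (𝓝 (L t)) := by
  have hlin : Tendsto (fun n : ℕ => lam * n) atTop atTop :=
    tendsto_natCast_atTop_atTop.const_mul_atTop hlam
  have hceil : Tendsto (fun n : ℕ => ⌈lam * n⌉₊) atTop atTop := tendsto_nat_ceil_atTop.comp hlin
  have hratio : Tendsto (fun n : ℕ => ENNReal.ofReal (lam * n / ⌈lam * n⌉₊)) atTop (𝓝 1) := by
    simpa using ENNReal.tendsto_ofReal
      (((tendsto_nat_ceil_div_atTop (R := ℝ)).comp hlin).inv₀ one_ne_zero)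
  have := ENNReal.Tendsto.mul hratio (Or.inl one_ne_zero) ((hconv t ht).comp hceil)
    (Or.inr one_ne_top)
  rw [one_mul] at this
  refine this.congr' ?_
  filter_upwards [hceil.eventually_ne_atTop 0] with n hn
  rw [Function.comp_apply, ENNReal.ofReal_div_of_pos (by positivity), ENNReal.ofReal_mul hlam.le,
    ENNReal.ofReal_natCast, ENNReal.ofReal_natCast, ← mul_assoc,
    ENNReal.div_mul_cancel (by exact_mod_cast hn) (natCast_ne_top _), mul_assoc]

theorem le_ofReal_mul_of_eventually_lt_ratio (ha : ∀ n, 0 < a n) (hK : AntitoneOn K (Ioi 0))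
    (hconv : ∀ t, 0 < t → Tendsto (fun n : ℕ => (n : ℝ≥0∞) * K (a n * t)) atTop (𝓝 (L t)))
    (hlam : 0 < lam) {φ : ℕ → ℕ} (hφ : Tendsto φ atTop atTop) {x : ℝ}
    (hx : ∀ᶠ k in atTop, x < a ⌈lam * φ k⌉₊ / a (φ k)) {t u : ℝ} (ht : 0 < t) (hu : 0 < u)
    (hut : u ≤ x * t) : L t ≤ ENNReal.ofReal lam * L u := by
  refine le_of_tendsto_of_tendsto ((tendsto_ofReal_mul_natCast_mul_ceil hconv hlam ht).comp hφ)
    (ENNReal.Tendsto.const_mul ((hconv u hu).comp hφ) (Or.inr ofReal_ne_top)) ?_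
  filter_upwards [hx] with k hk
  rw [lt_div_iff₀ (ha _)] at hk
  have hle : a (φ k) * u ≤ a ⌈lam * φ k⌉₊ * t := by nlinarith [ha (φ k)]
  simp only [Function.comp_apply]
  gcongr
  exact hK (mul_pos (ha _) hu) (mul_pos (ha _) ht) hle

theorem ofReal_mul_le_of_eventually_ratio_lt (ha : ∀ n, 0 < a n) (hK : AntitoneOn K (Ioi 0))
    (hconv : ∀ t, 0 < t → Tendsto (fun n : ℕ => (n : ℝ≥0∞) * K (a n * t)) atTop (𝓝 (L t)))
    (hlam : 0 < lam) {φ : ℕ → ℕ} (hφ : Tendsto φ atTop atTop) {x : ℝ}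
    (hx : ∀ᶠ k in atTop, a ⌈lam * φ k⌉₊ / a (φ k) < x) {t v : ℝ} (ht : 0 < t)
    (hvt : x * t ≤ v) : ENNReal.ofReal lam * L v ≤ L t := by
  have hv : 0 < v := by
    obtain ⟨k, hk⟩ := hx.exists
    exact lt_of_lt_of_le (mul_pos ((div_pos (ha _) (ha _)).trans hk) ht) hvt
  refine le_of_tendsto_of_tendsto
    (ENNReal.Tendsto.const_mul ((hconv v hv).comp hφ) (Or.inr ofReal_ne_top))
    ((tendsto_ofReal_mul_natCast_mul_ceil hconv hlam ht).comp hφ) ?_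
  filter_upwards [hx] with k hk
  rw [div_lt_iff₀ (ha _)] at hk
  have hle : a ⌈lam * φ k⌉₊ * t ≤ a (φ k) * v := by nlinarith [ha (φ k)]
  simp only [Function.comp_apply]
  gcongr
  exact hK (mul_pos (ha _) ht) (mul_pos (ha _) hv) hle

/-- Convergence of types: a limit point of `a ⌈lam * n⌉₊ / a n` in `[0, ∞]` is a scale of level
`lam`; the values `0` and `∞` would force `L t₀ = 0`. -/
theorem exists_isScaling (ha : ∀ n, 0 < a n) (hK : AntitoneOn K (Ioi 0))
    (hconv : ∀ t, 0 < t → Tendsto (fun n : ℕ => (n : ℝ≥0∞) * K (a n * t)) atTop (𝓝 (L t)))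
    (ht₀ : 0 < t₀) (hL₀ : L t₀ ≠ 0) (hL_top : Tendsto L atTop (𝓝 0)) (hlam : 0 < lam) :
    ∃ c, IsScaling L lam c := by
  obtain ⟨c, φ, hφ, hlim⟩ :=
    CompactSpace.tendsto_subseq fun n => ENNReal.ofReal (a ⌈lam * n⌉₊ / a n)
  have lower : ∀ x : ℝ, ENNReal.ofReal x < c → ∀ t u, 0 < t → 0 < u → u ≤ x * t →
      L t ≤ ENNReal.ofReal lam * L u := fun x hx _ _ =>
    le_ofReal_mul_of_eventually_lt_ratio ha hK hconv hlam hφ.tendsto_atTop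
      ((hlim.eventually (lt_mem_nhds hx)).mono fun _ hk => (ENNReal.ofReal_lt_ofReal_iff'.1 hk).1)
  have upper : ∀ x : ℝ, c < ENNReal.ofReal x → ∀ t v, 0 < t → x * t ≤ v →
      ENNReal.ofReal lam * L v ≤ L t := fun x hx _ _ =>
    ofReal_mul_le_of_eventually_ratio_lt ha hK hconv hlam hφ.tendsto_atTop
      ((hlim.eventually (gt_mem_nhds hx)).mono fun _ hk => (ENNReal.ofReal_lt_ofReal_iff'.1 hk).1)
  have hc_top : c ≠ ∞ := by
    rintro rfl
    have hlim_top : Tendsto (fun u => ENNReal.ofReal lam * L u) atTop (𝓝 0) := by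
      simpa using ENNReal.Tendsto.const_mul hL_top (Or.inr ofReal_ne_top)
    refine hL₀ (nonpos_iff_eq_zero.1 (ge_of_tendsto hlim_top ?_))
    filter_upwards [eventually_gt_atTop 0] with u hu
    exact lower (u / t₀) ofReal_lt_top t₀ u ht₀ hu (div_mul_cancel₀ _ ht₀.ne').ge
  have hc_zero : c ≠ 0 := by
    rintro rfl
    have hle : ENNReal.ofReal lam * L t₀ ≤ 0 := by
      refine ge_of_tendsto hL_top ?_
      filter_upwards [eventually_gt_atTop 0] with t ht
      exact upper (t₀ / t) (ENNReal.ofReal_pos.2 (by positivity)) t t₀ ht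
        (div_mul_cancel₀ t₀ ht.ne').le
    rw [nonpos_iff_eq_zero, mul_eq_zero, ENNReal.ofReal_eq_zero] at hle
    exact hle.elim hlam.not_ge hL₀
  refine ⟨c.toReal, ENNReal.toReal_pos hc_zero hc_top,
    fun t ht => ⟨fun u hu hut => ?_, fun v hvt => ?_⟩⟩
  · obtain ⟨x, hux, hxc⟩ := exists_between ((div_lt_iff₀ ht).2 hut)
    exact lower x ((ENNReal.ofReal_lt_iff_lt_toReal ((div_pos hu ht).le.trans hux.le) hc_top).2 hxc)
      t u ht hu ((div_le_iff₀ ht).1 hux.le)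
  · obtain ⟨x, hcx, hxv⟩ := exists_between ((lt_div_iff₀ ht).2 hvt)
    exact upper x ((ENNReal.lt_ofReal_iff_toReal_lt hc_top).2 hcx) t v ht
      ((le_div_iff₀ ht).1 hxv.le)

end ConvergenceOfTypes

section PowerLaw

variable {L : ℝ → ℝ≥0∞} {t₀ : ℝ}

theorem exists_isScaling_rpow (hex : ∀ lam, 0 < lam → ∃ c, IsScaling L lam c) (ht₀ : 0 < t₀)
    (hL₀ : L t₀ ≠ 0) (hL₀' : L t₀ ≠ ∞) (hL_top : Tendsto L atTop (𝓝 0)) :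
    ∃ β : ℝ, 0 ≤ β ∧ ∀ lam, 0 < lam → IsScaling L lam (lam ^ β) := by
  choose! f hf using hex
  have hmono : MonotoneOn f (Ioi 0) := fun lam hlam _ _ hle =>
    (hf lam hlam).scale_mono (hf _ (lt_of_lt_of_le hlam hle)) hle hlam ht₀ hL₀ hL₀' hL_top
  have hmul : ∀ lam μ, 0 < lam → 0 < μ → f (lam * μ) = f lam * f μ := fun lam μ hlam hμ =>
    have hprod := (hf lam hlam).mul (hf μ hμ) hlam.le
    ((hf _ (mul_pos hlam hμ)).scale_le_of_same_level hprod ht₀ hL₀ hL_top).antisymm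
      (hprod.scale_le_of_same_level (hf _ (mul_pos hlam hμ)) ht₀ hL₀ hL_top)
  obtain ⟨β, hβ, hf_eq⟩ := exists_rpow_of_map_mul_of_monotoneOn (fun lam hlam => (hf lam hlam).1)
    hmul hmono
  exact ⟨β, hβ, fun lam hlam => hf_eq lam hlam ▸ hf lam hlam⟩

/-- With scale `1` at every level, `L` would vanish on `(t₀, ∞)`. -/
theorem not_forall_isScaling_one (ht₀ : 0 < t₀) (hL₀ : L t₀ ≠ 0) (hL₀' : L t₀ ≠ ∞)
    (hL_cont : ContinuousWithinAt L (Ioi t₀) t₀) : ¬ ∀ lam, 0 < lam → IsScaling L lam 1 := by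
  intro h
  have hzero : ∀ v, t₀ < v → L v = 0 := by
    intro v hv
    by_contra hv₀
    obtain ⟨n, hn⟩ := ENNReal.exists_nat_mul_gt hv₀ hL₀'
    have hn₀ : n ≠ 0 := by rintro rfl; simp at hn
    have hle := ((h n (by positivity)).2 t₀ ht₀).2 v (by rwa [one_mul])
    rw [ENNReal.ofReal_natCast] at hle
    exact hle.not_gt hn
  refine hL₀ (tendsto_nhds_unique hL_cont (tendsto_const_nhds.congr' ?_))
  filter_upwards [self_mem_nhdsWithin] with v hv using (hzero v hv).symm

theorem eq_ofReal_mul_rpow_of_isScaling {β : ℝ} (hβ : 0 < β)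
    (hsc : ∀ lam, 0 < lam → IsScaling L lam (lam ^ β)) (ht₀ : 0 < t₀) (hL₀' : L t₀ ≠ ∞)
    {t : ℝ} (ht : 0 < t) :
    L t = ENNReal.ofReal ((L t₀).toReal * t₀ ^ β⁻¹ * t ^ (-β⁻¹)) := by
  set A : ℝ → ℝ≥0∞ := fun s => ENNReal.ofReal ((L t₀).toReal * t₀ ^ β⁻¹ * s ^ (-β⁻¹))
  have hA_bounds : ∀ s, 0 < s → (∀ u, 0 < u → u < s → A s ≤ L u) ∧ (∀ v, s < v → L v ≤ A s) := by
    intro s hs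
    set lam := (s / t₀) ^ β⁻¹ with hlam_def
    have hlam : 0 < lam := by positivity
    have hscale : lam ^ β * t₀ = s := by
      rw [← Real.rpow_mul (by positivity), inv_mul_cancel₀ hβ.ne', Real.rpow_one,
        div_mul_cancel₀ _ ht₀.ne']
    have hA : ENNReal.ofReal lam * A s = L t₀ := by
      have hs' : 0 < s ^ β⁻¹ := by positivity
      have ht₀' : 0 < t₀ ^ β⁻¹ := by positivity
      have hreal : lam * ((L t₀).toReal * t₀ ^ β⁻¹ * s ^ (-β⁻¹)) = (L t₀).toReal := by
        rw [hlam_def, Real.div_rpow hs.le ht₀.le, Real.rpow_neg hs.le]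
        field_simp
      rw [← ENNReal.ofReal_mul hlam.le, hreal, ENNReal.ofReal_toReal hL₀']
    have hlam₀ : ENNReal.ofReal lam ≠ 0 := (ENNReal.ofReal_pos.2 hlam).ne'
    obtain ⟨hu, hv⟩ := (hsc lam hlam).2 t₀ ht₀
    rw [hscale] at hu hv
    refine ⟨fun u hu₀ hus => ?_, fun v hsv => ?_⟩
    · rw [← ENNReal.mul_le_mul_iff_right hlam₀ ofReal_ne_top, hA]
      exact hu u hu₀ hus
    · rw [← ENNReal.mul_le_mul_iff_right hlam₀ ofReal_ne_top, hA]
      exact hv v hsv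
  have hA_cont : ContinuousAt A t := ENNReal.continuous_ofReal.continuousAt.comp
    (continuousAt_const.mul (Real.continuousAt_rpow_const _ _ (Or.inl ht.ne')))
  apply le_antisymm
  · refine ge_of_tendsto (hA_cont.mono_left (nhdsWithin_le_nhds (s := Iio t))) ?_
    filter_upwards [Ioo_mem_nhdsLT ht] with s hs using (hA_bounds s hs.1).2 t hs.2
  · refine le_of_tendsto (hA_cont.mono_left (nhdsWithin_le_nhds (s := Ioi t))) ?_
    filter_upwards [self_mem_nhdsWithin] with s (hs : t < s) using
      (hA_bounds s (ht.trans hs)).1 t ht hs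

theorem exists_eq_ofReal_mul_rpow_of_tendsto {K : ℝ → ℝ≥0∞} {a : ℕ → ℝ}
    (ha : ∀ n, 0 < a n) (hK : AntitoneOn K (Ioi 0))
    (hconv : ∀ t, 0 < t → Tendsto (fun n : ℕ => (n : ℝ≥0∞) * K (a n * t)) atTop (𝓝 (L t)))
    (ht₀ : 0 < t₀) (hL₀ : L t₀ ≠ 0) (hL₀' : L t₀ ≠ ∞) (hL_top : Tendsto L atTop (𝓝 0))
    (hL_cont : ContinuousWithinAt L (Ioi t₀) t₀) :
    ∃ lam α : ℝ, 0 < lam ∧ 0 < α ∧ ∀ t, 0 < t → L t = ENNReal.ofReal (lam * t ^ (-α)) := by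
  obtain ⟨β, hβ₀, hsc⟩ := exists_isScaling_rpow
    (fun lam hlam => exists_isScaling ha hK hconv ht₀ hL₀ hL_top hlam) ht₀ hL₀ hL₀' hL_top
  have hβ : 0 < β := hβ₀.lt_of_ne <| by
    rintro rfl
    exact not_forall_isScaling_one ht₀ hL₀ hL₀' hL_cont (by simpa using hsc)
  have hL₀_pos : 0 < (L t₀).toReal := ENNReal.toReal_pos hL₀ hL₀'
  exact ⟨(L t₀).toReal * t₀ ^ β⁻¹, β⁻¹, by positivity, inv_pos.2 hβ,
    fun t ht => eq_ofReal_mul_rpow_of_isScaling hβ hsc ht₀ hL₀' ht⟩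

end PowerLaw

/-- A distribution function on `[0,∞)` is Boolean max-stable (a nondegenerate limit of
rescaled `n`-fold Boolean max-convolutions) iff it is a Dagum law. -/
theorem boolean_max_stable_iff_dagum (F : ℝ → ℝ) (hF : IsDistFun F)
    (hnondeg : ∃ t : ℝ, 0 < t ∧ 0 < F t ∧ F t < 1) :
    (∃ G : ℝ → ℝ, IsDistFun G ∧ ∃ a : ℕ → ℝ, (∀ n, 0 < a n) ∧
        ∀ t : ℝ, 0 < t →
          Tendsto (fun n => nfold G n (a n * t)) atTop (nhds (F t))) ↔
    (∃ lam α : ℝ, 0 < lam ∧ 0 < α ∧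
        ∀ t : ℝ, 0 < t → F t = (1 + lam * t ^ (-α))⁻¹) := by
  constructor
  · obtain ⟨-, hF_cont, hF_top, hF_mem⟩ := hF
    rintro ⟨G, ⟨hG_mono, -, -, hG_mem⟩, a, ha, hconv⟩
    obtain ⟨t₀, ht₀, hF₀, hF₁⟩ := hnondeg
    obtain ⟨lam, α, hlam, hα, hL⟩ := exists_eq_ofReal_mul_rpow_of_tendsto (L := odds ∘ F) ha
      (odds_antitone.comp_monotoneOn (hG_mono.mono Ioi_subset_Ici_self))
      (fun t ht => tendsto_natCast_mul_odds
        (fun n => (hG_mem (a n * t) (mul_pos (ha n) ht).le).2) (hconv t ht))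
      ht₀ (mt odds_eq_zero_iff.1 hF₁.not_ge) (mt odds_eq_top_iff.1 hF₀.not_ge)
      (by simpa using (continuous_odds.tendsto 1).comp hF_top)
      ((continuous_odds.continuousAt.comp_continuousWithinAt (hF_cont t₀ ht₀.le)).mono
        Ioi_subset_Ici_self)
    exact ⟨lam, α, hlam, hα, fun t ht =>
      eq_inv_one_add_of_odds_eq (hF_mem t ht.le) (by positivity : 0 ≤ lam * t ^ (-α)) (hL t ht)⟩
  · rintro ⟨lam, α, hlam, hα, hdagum⟩
    refine ⟨F, hF, fun n => max (n : ℝ) 1 ^ α⁻¹,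
      fun n => by positivity, fun t ht => tendsto_const_nhds.congr' ?_⟩
    filter_upwards [eventually_ge_atTop 1] with n hn
    rw [max_eq_left (by exact_mod_cast hn)]
    exact (nfold_rpow_inv_mul_of_dagum hlam.le hα.ne' hdagum (by omega) ht).symm
end
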